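/- There is a constant C such that for every self-feeding circuit of size n, depth d, and with m edges, there exists a BNL-program that is asynchronously equivalent to the circuit, has size at most C·(n+m), and has computation delay at most C·(d+1) relative to the circuit; moreover, if the circuit has bounded fan-in, the program can be taken to have size at most C·n. -/

import Mathlib

/-! ### Boolean network logic (BNL) -/

/-- Formulas of Boolean network logic (BNL), over schema variables indexed by `ℕ`. -/
inductive BForm where
  | tru : BForm
  | var : ℕ → BForm
  | not : BForm → BForm
  | and : BForm → BForm → BForm

namespace BForm

/-- Truth value of a BNL-formula under a valuation of the schema variables. -/
def eval (g : ℕ → Bool) : BForm → Bool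
  | tru => true
  | var x => g x
  | not φ => !(eval g φ)
  | and φ ψ => eval g φ && eval g ψ

/-- Number of occurrences of `⊤`, variables, `¬` and `∧`. -/
def size : BForm → ℕ
  | tru => 1
  | var _ => 1
  | not φ => size φ + 1
  | and φ ψ => size φ + size ψ + 1

/-- Connective-nesting depth. -/
def depth : BForm → ℕ
  | tru => 0
  | var _ => 0
  | not φ => depth φ + 1
  | and φ ψ => max (depth φ) (depth ψ) + 1

/-- The set of schema variables occurring in a formula. -/
def vars : BForm → Finset ℕ
  | tru => ∅
  | var x => {x}
  | not φ => vars φ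
  | and φ ψ => vars φ ∪ vars ψ

end BForm

/-- A BNL-program over the finite set `T` of schema variables (linearly ordered as natural
numbers), with input predicates `I`, terminal values `term` (relevant on `T \ I`), iteration
clause bodies `iter` (relevant on `T`), print predicates `Pr` and attention predicates `At`. -/
structure BNL where
  T : Finset ℕ
  I : Finset ℕ
  hIT : I ⊆ T
  term : ℕ → Bool
  iter : ℕ → BForm
  hiter : ∀ X ∈ T, (iter X).vars ⊆ T
  Pr : Finset ℕ
  hPr : Pr ⊆ T
  At : Finset ℕ
  hAt : At ⊆ T

/-- The valuation of the elements of a finite set `I ⊆ ℕ` induced by the bit string `u`,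
via the increasing enumeration of `I`. -/
def inputVal (I : Finset ℕ) (u : ℕ → Bool) (X : ℕ) : Bool :=
  u ((I.sort (· ≤ ·)).idxOf X)

namespace BNL

/-- The global configuration of a BNL-program at round `t` on input bit string `u`. -/
def conf (Λ : BNL) (u : ℕ → Bool) : ℕ → ℕ → Bool
  | 0 => fun X => if X ∈ Λ.I then inputVal Λ.I u X else Λ.term X
  | t + 1 => fun X => (Λ.iter X).eval (Λ.conf u t)

/-- The global configuration string at round `t`: the values on `T` in increasing order. -/
def confStr (Λ : BNL) (u : ℕ → Bool) (t : ℕ) : List Bool :=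
  (Λ.T.sort (· ≤ ·)).map (Λ.conf u t)

/-- Round `t` is an output round iff some attention predicate is true at round `t`. -/
def attn (Λ : BNL) (u : ℕ → Bool) (t : ℕ) : Prop :=
  ∃ X ∈ Λ.At, Λ.conf u t X = true

/-- The print string at round `t`: the values of the print predicates in increasing order. -/
def out (Λ : BNL) (u : ℕ → Bool) (t : ℕ) : List Bool :=
  (Λ.Pr.sort (· ≤ ·)).map (Λ.conf u t)

/-- The size of a BNL-program: the total number of occurrences of `⊤`, variables, `¬`
and `∧` in its terminal and iteration clauses. -/
def size (Λ : BNL) : ℕ :=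
  (Λ.T \ Λ.I).card + ∑ X ∈ Λ.T, (Λ.iter X).size

/-- The depth of a BNL-program: the maximum depth of the bodies of its iteration clauses. -/
def depth (Λ : BNL) : ℕ :=
  Λ.T.sup fun X => (Λ.iter X).depth

/-- Pointwise transient time: the least `t` such that `g_t = g_{t+c}` on `T` for some `c ≥ 1`. -/
noncomputable def transientAt (Λ : BNL) (u : ℕ → Bool) : ℕ :=
  sInf {t | ∃ c, 1 ≤ c ∧ ∀ X ∈ Λ.T, Λ.conf u (t + c) X = Λ.conf u t X}

/-- The transient time of a program: the maximum of its pointwise transient times. -/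
def HasTransientTime (Λ : BNL) (n : ℕ) : Prop :=
  (∀ u, Λ.transientAt u ≤ n) ∧ ∃ u, Λ.transientAt u = n

end BNL

/-- An abstract machine producing, for each input bit string, a global configuration string,
an attention condition, and a print string at every round. -/
structure Machine where
  ins : ℕ
  prints : ℕ
  conf : (ℕ → Bool) → ℕ → List Bool
  attn : (ℕ → Bool) → ℕ → Prop
  out : (ℕ → Bool) → ℕ → List Bool

/-- The output rounds of a machine on a given input, as an ordered subtype of `ℕ`. -/
abbrev Machine.Rounds (M : Machine) (u : ℕ → Bool) := {t : ℕ // M.attn u t}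

/-- The machine determined by a BNL-program. -/
def BNL.toM (Λ : BNL) : Machine :=
  ⟨Λ.I.card, Λ.Pr.card, Λ.confStr, Λ.attn, Λ.out⟩

/-- Asynchronous equivalence: equally many input and print positions and, on every input,
an order isomorphism between the output rounds under which the outputs agree. -/
def AsyncEquiv (M₁ M₂ : Machine) : Prop :=
  M₁.ins = M₂.ins ∧ M₁.prints = M₂.prints ∧
  ∀ u : ℕ → Bool, ∃ e : M₁.Rounds u ≃o M₂.Rounds u,
    ∀ t : M₁.Rounds u, M₁.out u t.val = M₂.out u (e t).val

/-- Global equivalence: asynchronous equivalence together with identical global configuration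
sequences and identical output rounds on every input. -/
def GlobalEquiv (M₁ M₂ : Machine) : Prop :=
  AsyncEquiv M₁ M₂ ∧ ∀ u t, M₁.conf u t = M₂.conf u t ∧ (M₁.attn u t ↔ M₂.attn u t)

/-- `M₁` is asynchronously equivalent to `M₂` with computation delay at most `D`:
matched output rounds `x` of `M₁` and `y` of `M₂` satisfy `y ≤ x` and `x ≤ D·y`. -/
def EquivWithDelay (M₁ M₂ : Machine) (D : ℕ) : Prop :=
  M₁.ins = M₂.ins ∧ M₁.prints = M₂.prints ∧
  ∀ u : ℕ → Bool, ∃ e : M₁.Rounds u ≃o M₂.Rounds u,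
    (∀ t : M₁.Rounds u, M₁.out u t.val = M₂.out u (e t).val) ∧
    ∀ t : M₁.Rounds u, (e t).val ≤ t.val ∧ t.val ≤ D * (e t).val

/-! ### Boolean circuits and self-feeding circuits -/

/-- Gate labels: input gates (unlabeled), and `∧`, `∨`, `¬` gates. -/
inductive GateLabel where
  | inp : GateLabel
  | and : GateLabel
  | or : GateLabel
  | not : GateLabel
deriving DecidableEq

/-- A Boolean circuit: a finite DAG (presented in topological order) whose non-input
gates are labeled `∧`, `∨`, `¬`; `¬`-gates have in-degree 1, input gates in-degree 0.
Input gates and output gates (gates of out-degree 0) are linearly ordered by lists. -/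
structure Circuit where
  size : ℕ
  label : Fin size → GateLabel
  /-- `edge j g` means gate `j` feeds into gate `g`; edges respect the topological
  order of the indices, so the graph is acyclic. -/
  edge : Fin size → Fin size → Bool
  topo : ∀ j g, edge j g = true → j < g
  inputs : List (Fin size)
  outputs : List (Fin size)
  inputs_nodup : inputs.Nodup
  outputs_nodup : outputs.Nodup
  inputs_spec : ∀ g, g ∈ inputs ↔ label g = GateLabel.inp
  inp_no_pred : ∀ g, label g = GateLabel.inp → ∀ j, edge j g = false
  not_fanin : ∀ g, label g = GateLabel.not →
    (Finset.univ.filter fun j => edge j g = true).card = 1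
  outputs_spec : ∀ g, g ∈ outputs ↔ ∀ j, edge g j = false

namespace Circuit

/-- Iterated evaluation: `evAux x n` computes the correct gate values for all gates of
index `< n`; `∧`/`∨`-gates of in-degree 0 output `1`/`0` respectively. -/
def evAux (C : Circuit) (x : ℕ → Bool) : ℕ → Fin C.size → Bool
  | 0, _ => false
  | n + 1, g =>
    match C.label g with
    | .inp => x (C.inputs.idxOf g)
    | .and => decide (∀ j, C.edge j g = true → C.evAux x n j = true)
    | .or => decide (∃ j, C.edge j g = true ∧ C.evAux x n j = true)
    | .not => decide (∀ j, C.edge j g = true → C.evAux x n j = false)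

/-- The value of gate `g` on input `x` (the `m`-th input gate receives bit `x m`). -/
def eval (C : Circuit) (x : ℕ → Bool) (g : Fin C.size) : Bool :=
  C.evAux x (C.size + 1) g

/-- Iterated height computation. -/
def hAux (C : Circuit) : ℕ → Fin C.size → ℕ
  | 0, _ => 0
  | n + 1, g => (Finset.univ.filter fun j => C.edge j g = true).sup fun j => C.hAux n j + 1

/-- The height of a gate: the length of the longest directed path ending at it. -/
def height (C : Circuit) (g : Fin C.size) : ℕ := C.hAux C.size g

/-- The depth of a circuit: the length of the longest directed path from a gate of
in-degree 0 to an output gate. -/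
def depth (C : Circuit) : ℕ := (C.outputs.map C.height).foldr max 0

/-- The number of edges of a circuit. -/
def edgeCount (C : Circuit) : ℕ :=
  ((Finset.univ ×ˢ Finset.univ).filter
    fun e : Fin C.size × Fin C.size => C.edge e.1 e.2 = true).card

/-- Bounded fan-in: every `∧`-gate and `∨`-gate has in-degree at most 2. -/
def BoundedFanIn (C : Circuit) : Prop :=
  ∀ g, (C.label g = GateLabel.and ∨ C.label g = GateLabel.or) →
    (Finset.univ.filter fun j => C.edge j g = true).card ≤ 2

end Circuit

/-- A self-feeding circuit for `k`: a circuit with `k` input and `k` output gates, with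
input positions `Ipos`, an initializing function `init` (relevant outside `Ipos`), print
positions `Ppos` and attention positions `Apos`. -/
structure SelfFeeding (k : ℕ) extends Circuit where
  in_len : inputs.length = k
  out_len : outputs.length = k
  Ipos : Finset (Fin k)
  init : Fin k → Bool
  Ppos : Finset (Fin k)
  Apos : Finset (Fin k)

namespace SelfFeeding

/-- The configuration sequence of a self-feeding circuit on input `u` (bits assigned to
the input positions in increasing order): the circuit's output string is fed back in. -/
def conf {k : ℕ} (C : SelfFeeding k) (u : ℕ → Bool) : ℕ → Fin k → Bool
  | 0 => fun v => if v ∈ C.Ipos then u ((C.Ipos.sort (· ≤ ·)).idxOf v) else C.init v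
  | n + 1 => fun v =>
      C.toCircuit.eval (fun m => if h : m < k then C.conf u n ⟨m, h⟩ else false)
        (C.toCircuit.outputs.get (Fin.cast C.out_len.symm v))

/-- Round `t` is an output round iff some attention position holds `1`. -/
def attn {k : ℕ} (C : SelfFeeding k) (u : ℕ → Bool) (t : ℕ) : Prop :=
  ∃ v ∈ C.Apos, C.conf u t v = true

/-- The print string at round `t`. -/
def out {k : ℕ} (C : SelfFeeding k) (u : ℕ → Bool) (t : ℕ) : List Bool :=
  (C.Ppos.sort (· ≤ ·)).map (C.conf u t)

/-- The machine determined by a self-feeding circuit. -/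
def toM {k : ℕ} (C : SelfFeeding k) : Machine :=
  ⟨C.Ipos.card, C.Ppos.card, fun u t => List.ofFn (C.conf u t), C.attn, C.out⟩

end SelfFeeding

/-!
The program runs the circuit slowed down by the factor `p = depth + 2`, one circuit round per
period of `p` program rounds, paced by a ring of `p` clock nodes. Each gate has a node whose
clause evaluates the gate on the nodes of its predecessors, so within a period the evaluation of
the current configuration reaches every gate of height `h` after `h + 1` rounds, and the output
gates by the last round. Each position has two nodes: a display node, which carries the
input, print and attention predicates and is on only at rounds `p·s`, when it has just loaded the
output gate at the clock tick; and a state node, which keeps the configuration through the rest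
of the period and forgets it at the tick. Round `p·s` of the program is then round `s` of the
circuit, which gives delay `p ≤ 2·(depth + 1)`, and a gate of in-degree `c` costs a clause of
size `O(c)`, so the program has size `O(n + m)`, and `O(n)` under bounded fan-in.
-/

lemma Nat.succ_mod_of_not_dvd {p t : ℕ} (h : ¬p ∣ t + 1) : (t + 1) % p = t % p + 1 := by
  have := Nat.div_add_mod (t + 1) p
  have := Nat.div_add_mod t p
  rw [Nat.succ_div_of_not_dvd h] at *
  omega

lemma Nat.mod_add_one_eq_of_dvd_succ {p t : ℕ} (h : p ∣ t + 1) : t % p + 1 = p := by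
  have := Nat.div_add_mod (t + 1) p
  have := Nat.div_add_mod t p
  rw [Nat.succ_div_of_dvd h, Nat.mod_eq_zero_of_dvd h, mul_add] at *
  omega

lemma List.idxOf_map_of_injective {α β : Type*} [BEq α] [LawfulBEq α] [BEq β] [LawfulBEq β]
    {f : α → β} (hf : Function.Injective f) (l : List α) (a : α) :
    (l.map f).idxOf (f a) = l.idxOf a := by
  induction l with
  | nil => rfl
  | cons b l ih =>
    rw [List.map_cons, List.idxOf_cons, List.idxOf_cons, ih]
    by_cases hb : b = a
    · simp [hb]
    · simp [beq_false_of_ne hb, beq_false_of_ne (hf.ne hb)]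

lemma Finset.sort_map_valEmbedding {k : ℕ} (s : Finset (Fin k)) :
    (s.map Fin.valEmbedding).sort (· ≤ ·) = (s.sort (· ≤ ·)).map Fin.val :=
  (StrictMonoOn.map_finsetSort Fin.valEmbedding s fun _ _ _ _ h => h).symm

namespace BForm

def or (φ ψ : BForm) : BForm := not (and (not φ) (not ψ))

def conj (l : List BForm) : BForm := l.foldr and tru

@[simp] lemma eval_or (g : ℕ → Bool) (φ ψ : BForm) :
    (or φ ψ).eval g = (φ.eval g || ψ.eval g) := by
  simp [or, eval]

@[simp] lemma size_or (φ ψ : BForm) : (or φ ψ).size = φ.size + ψ.size + 4 := by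
  simp only [or, size]; omega

@[simp] lemma vars_or (φ ψ : BForm) : (or φ ψ).vars = φ.vars ∪ ψ.vars := rfl

@[simp] lemma eval_conj (g : ℕ → Bool) (l : List BForm) :
    (conj l).eval g = l.all (eval g) := by
  induction l with
  | nil => rfl
  | cons φ l ih => simp [conj, eval, ← ih]

lemma size_conj (l : List BForm) : (conj l).size = (l.map fun φ => φ.size + 1).sum + 1 := by
  induction l with
  | nil => rfl
  | cons φ l ih =>
    simp only [conj, List.foldr_cons, size, List.map_cons, List.sum_cons] at ih ⊢
    omega

lemma mem_vars_conj {l : List BForm} {x : ℕ} : x ∈ (conj l).vars ↔ ∃ φ ∈ l, x ∈ φ.vars := by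
  induction l with
  | nil => simp [conj, vars]
  | cons φ l ih => simp [conj, vars, ← ih]

end BForm

namespace Circuit

variable (C : Circuit)

def preds (g : Fin C.size) : Finset (Fin C.size) := Finset.univ.filter fun j => C.edge j g

@[simp] lemma mem_preds {j g : Fin C.size} : j ∈ C.preds g ↔ C.edge j g = true := by
  simp [preds]

lemma lt_of_mem_preds {j g : Fin C.size} (h : j ∈ C.preds g) : j < g :=
  C.topo j g (C.mem_preds.1 h)

def gateValue (x : ℕ → Bool) (F : Fin C.size → Bool) (g : Fin C.size) : Bool :=
  match C.label g with
  | .inp => x (C.inputs.idxOf g)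
  | .and => decide (∀ j, C.edge j g = true → F j = true)
  | .or => decide (∃ j, C.edge j g = true ∧ F j = true)
  | .not => decide (∀ j, C.edge j g = true → F j = false)

lemma gateValue_congr (x : ℕ → Bool) {F F' : Fin C.size → Bool} {g : Fin C.size}
    (h : ∀ j ∈ C.preds g, F j = F' j) : C.gateValue x F g = C.gateValue x F' g := by
  simp only [mem_preds] at h
  unfold gateValue
  split
  · rfl
  · exact decide_eq_decide.2 (forall_congr' fun j => imp_congr_right fun hj => by rw [h j hj])
  · exact decide_eq_decide.2 (exists_congr fun j => and_congr_right fun hj => by rw [h j hj])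
  · exact decide_eq_decide.2 (forall_congr' fun j => imp_congr_right fun hj => by rw [h j hj])

lemma evAux_eq_evAux (x : ℕ → Bool) {a b : ℕ} {g : Fin C.size} (ha : g.val < a)
    (hb : g.val < b) :
    C.evAux x a g = C.evAux x b g := by
  induction a generalizing b g with
  | zero => omega
  | succ a ih =>
    obtain ⟨b, rfl⟩ : ∃ b', b = b' + 1 := ⟨b - 1, by omega⟩
    refine C.gateValue_congr x fun j hj => ?_
    have := C.lt_of_mem_preds hj
    exact ih (by omega) (by omega)

lemma eval_eq_gateValue (x : ℕ → Bool) (g : Fin C.size) :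
    C.eval x g = C.gateValue x (C.eval x) g :=
  C.gateValue_congr x fun j _ => C.evAux_eq_evAux x j.isLt (by omega)

lemma hAux_eq_hAux {a b : ℕ} {g : Fin C.size} (ha : g.val < a) (hb : g.val < b) :
    C.hAux a g = C.hAux b g := by
  induction a generalizing b g with
  | zero => omega
  | succ a ih =>
    obtain ⟨b, rfl⟩ : ∃ b', b = b' + 1 := ⟨b - 1, by omega⟩
    refine Finset.sup_congr rfl fun j hj => ?_
    have := C.lt_of_mem_preds hj
    exact congrArg (· + 1) (ih (by omega) (by omega))

lemma height_lt_height_of_mem_preds {j g : Fin C.size} (h : j ∈ C.preds g) :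
    C.height j < C.height g := by
  obtain ⟨n, hn⟩ : ∃ n, C.size = n + 1 := ⟨C.size - 1, by have := g.isLt; omega⟩
  have hjg := C.lt_of_mem_preds h
  have hj : C.height j = C.hAux n j := C.hAux_eq_hAux j.isLt (by omega)
  have hg : C.height g = (C.preds g).sup fun j => C.hAux n j + 1 :=
    C.hAux_eq_hAux (b := n + 1) g.isLt (by omega)
  rw [hj, hg, Nat.lt_iff_add_one_le]
  exact Finset.le_sup (f := fun j => C.hAux n j + 1) h

lemma height_le_depth {g : Fin C.size} (h : g ∈ C.outputs) : C.height g ≤ C.depth :=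
  List.le_max_of_le' 0 (List.mem_map_of_mem h) le_rfl

lemma hAux_le (n : ℕ) (g : Fin C.size) : C.hAux n g ≤ n := by
  induction n generalizing g with
  | zero => exact le_rfl
  | succ n ih => exact Finset.sup_le fun j _ => Nat.succ_le_succ (ih j)

lemma depth_le_size : C.depth ≤ C.size :=
  List.max_le_of_forall_le _ _ fun _ h => by
    obtain ⟨g, -, rfl⟩ := List.mem_map.1 h
    exact C.hAux_le C.size g

lemma edgeCount_eq_sum_card_preds : C.edgeCount = ∑ g, (C.preds g).card := by
  simp only [edgeCount, preds, Finset.card_filter, Finset.sum_product]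
  exact Finset.sum_comm

lemma card_preds_le_two (hC : C.BoundedFanIn) (g : Fin C.size) : (C.preds g).card ≤ 2 := by
  cases hg : C.label g with
  | inp => simp [preds, C.inp_no_pred g hg]
  | and => exact hC g (.inl hg)
  | or => exact hC g (.inr hg)
  | not => exact (C.not_fanin g hg).le.trans one_le_two

lemma edgeCount_le_two_mul_size (hC : C.BoundedFanIn) : C.edgeCount ≤ 2 * C.size := by
  rw [edgeCount_eq_sum_card_preds]
  exact (Finset.sum_le_card_nsmul _ _ 2 fun g _ => C.card_preds_le_two hC g).trans_eq
    (by simp [mul_comm])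

noncomputable def gateFormula (input : ℕ → BForm) (gateVar : Fin C.size → ℕ)
    (g : Fin C.size) : BForm :=
  match C.label g with
  | .inp => input (C.inputs.idxOf g)
  | .and => .conj ((C.preds g).toList.map fun j => .var (gateVar j))
  | .or => .not (.conj ((C.preds g).toList.map fun j => .not (.var (gateVar j))))
  | .not => .conj ((C.preds g).toList.map fun j => .not (.var (gateVar j)))

variable {C} {input : ℕ → BForm} {gateVar : Fin C.size → ℕ} {g : Fin C.size}

lemma eval_gateFormula {ρ x : ℕ → Bool} {F : Fin C.size → Bool}
    (hinput : C.label g = .inp → (input (C.inputs.idxOf g)).eval ρ = x (C.inputs.idxOf g))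
    (hF : ∀ j ∈ C.preds g, ρ (gateVar j) = F j) :
    (C.gateFormula input gateVar g).eval ρ = C.gateValue x F g := by
  simp only [mem_preds] at hF
  unfold gateFormula gateValue
  cases hg : C.label g
  · exact hinput hg
  all_goals
    rw [Bool.eq_iff_iff]
    simp +contextual [List.all_eq_true, BForm.eval, hF]
  exact exists_congr fun j => and_congr_right fun hj => by rw [hF j hj]

lemma size_gateFormula_le : (C.gateFormula input gateVar g).size ≤
    3 * (C.preds g).card + 2 + (input (C.inputs.idxOf g)).size := by
  unfold gateFormula
  cases C.label g <;> simp [BForm.size_conj, BForm.size, Function.comp_def] <;> omega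

lemma vars_gateFormula_subset {s : Finset ℕ} (hgateVar : ∀ j ∈ C.preds g, gateVar j ∈ s)
    (hinput : C.label g = .inp → (input (C.inputs.idxOf g)).vars ⊆ s) :
    (C.gateFormula input gateVar g).vars ⊆ s := by
  intro y hy
  unfold gateFormula at hy
  cases hg : C.label g <;> simp only [hg, BForm.vars, BForm.mem_vars_conj] at hy
  · exact hinput hg hy
  all_goals
    obtain ⟨_, hφ, hy⟩ := hy
    obtain ⟨j, hj, rfl⟩ := List.mem_map.1 hφ
    simp only [BForm.vars, Finset.mem_singleton] at hy
    exact hy ▸ hgateVar j (Finset.mem_toList.1 hj)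

end Circuit

lemma equivWithDelay_of_dilation {M₁ M₂ : Machine} {p D : ℕ} (hp : 0 < p) (hpD : p ≤ D)
    (hins : M₁.ins = M₂.ins) (hprints : M₁.prints = M₂.prints)
    (hdvd : ∀ u t, M₁.attn u t → p ∣ t) (hattn : ∀ u s, M₁.attn u (p * s) ↔ M₂.attn u s)
    (hout : ∀ u s, M₁.out u (p * s) = M₂.out u s) :
    EquivWithDelay M₁ M₂ D := by
  refine ⟨hins, hprints, fun u => ?_⟩
  let f : M₂.Rounds u → M₁.Rounds u := fun s => ⟨p * s, (hattn u s).2 s.2⟩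
  have hf : StrictMono f := fun _ _ h => Nat.mul_lt_mul_of_pos_left h hp
  have hsurj : Function.Surjective f := fun t => by
    obtain ⟨s, hs⟩ := hdvd u t t.2
    exact ⟨⟨s, (hattn u s).1 (hs ▸ t.2)⟩, Subtype.ext hs.symm⟩
  let e := hf.orderIsoOfSurjective f hsurj
  have he (t : M₁.Rounds u) : t.val = p * (e.symm t).val :=
    congrArg Subtype.val (e.apply_symm_apply t).symm
  refine ⟨e.symm, fun t => he t ▸ hout u _, fun t => ⟨?_, ?_⟩⟩
  · rw [he t]; exact Nat.le_mul_of_pos_left _ hp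
  · rw [he t]; exact Nat.mul_le_mul_right _ hpD

def BNL.empty : BNL where
  T := ∅
  I := ∅
  hIT := subset_rfl
  term _ := false
  iter _ := .tru
  hiter _ h := absurd h (Finset.notMem_empty _)
  Pr := ∅
  hPr := subset_rfl
  At := ∅
  hAt := subset_rfl

lemma BNL.size_empty : BNL.empty.size = 0 := rfl

lemma BNL.equivWithDelay_empty (C : SelfFeeding 0) {D : ℕ} (hD : 1 ≤ D) :
    EquivWithDelay BNL.empty.toM C.toM D := by
  have hI := Finset.eq_empty_of_isEmpty C.Ipos
  have hP := Finset.eq_empty_of_isEmpty C.Ppos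
  refine equivWithDelay_of_dilation one_pos hD ?_ ?_ (fun _ _ _ => one_dvd _) ?_ ?_ <;>
    simp [BNL.toM, SelfFeeding.toM, BNL.empty, BNL.attn, SelfFeeding.attn, BNL.out,
      SelfFeeding.out, hI, hP]

namespace SelfFeeding

def feed {k : ℕ} (c : Fin k → Bool) (m : ℕ) : Bool := if h : m < k then c ⟨m, h⟩ else false

variable {k : ℕ} (C : SelfFeeding k)

def outGate (v : Fin k) : Fin C.size := C.outputs.get (Fin.cast C.out_len.symm v)

lemma conf_succ (u : ℕ → Bool) (n : ℕ) (v : Fin k) :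
    C.conf u (n + 1) v = C.eval (feed (C.conf u n)) (C.outGate v) := rfl

lemma height_outGate_le (v : Fin k) : C.height (C.outGate v) ≤ C.depth :=
  C.height_le_depth (List.get_mem _ _)

lemma idxOf_lt_of_label_inp {g : Fin C.size} (hg : C.label g = .inp) : C.inputs.idxOf g < k :=
  (List.idxOf_lt_length_iff.2 ((C.inputs_spec g).2 hg)).trans_eq C.in_len

/-- One evaluation of the circuit takes `depth + 1` rounds, and one more round moves the
result from the output gates to the display nodes. -/
abbrev period : ℕ := C.depth + 2

instance : NeZero C.period := ⟨Nat.succ_ne_zero _⟩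

abbrev Node := Fin k ⊕ Fin k ⊕ Fin C.size ⊕ Fin C.period

abbrev display (v : Fin k) : C.Node := .inl v
abbrev state (v : Fin k) : C.Node := .inr (.inl v)
abbrev gate (g : Fin C.size) : C.Node := .inr (.inr (.inl g))
abbrev clock (i : Fin C.period) : C.Node := .inr (.inr (.inr i))

/-- Display nodes come first, so that the input, print and attention predicates are ordered
as the corresponding positions of the circuit. -/
def enc : C.Node → ℕ
  | .inl v => v
  | .inr (.inl v) => k + v
  | .inr (.inr (.inl g)) => 2 * k + g
  | .inr (.inr (.inr i)) => 2 * k + C.size + i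

lemma enc_injective : Function.Injective C.enc := by
  rintro (a | a | a | a) (b | b | b | b) h <;> simp only [enc] at h <;> first
    | omega
    | simp only [Sum.inl.injEq, Sum.inr.injEq]; omega

def encEmb : C.Node ↪ ℕ := ⟨C.enc, C.enc_injective⟩

def lit (x : C.Node) : BForm := .var (C.enc x)

noncomputable def clause : C.Node → BForm
  | .inl v => .and (C.lit (C.clock (Fin.last _))) (C.lit (C.gate (C.outGate v)))
  | .inr (.inl v) =>
      .and (.or (C.lit (C.display v)) (C.lit (C.state v))) (.not (C.lit (C.clock (Fin.last _))))
  | .inr (.inr (.inl g)) =>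
      C.gateFormula (fun m => .or (.var m) (.var (k + m))) (fun j => C.enc (C.gate j)) g
  | .inr (.inr (.inr i)) => C.lit (C.clock (i - 1))

def initVal : C.Node → Bool
  | .inl v => C.init v
  | .inr (.inr (.inr i)) => decide (i = 0)
  | _ => false

lemma enc_mem (x : C.Node) : C.enc x ∈ Finset.univ.map C.encEmb :=
  Finset.mem_map_of_mem C.encEmb (Finset.mem_univ x)

lemma map_valEmbedding_subset (s : Finset (Fin k)) :
    s.map Fin.valEmbedding ⊆ Finset.univ.map C.encEmb := by
  intro _ hx
  obtain ⟨v, -, rfl⟩ := Finset.mem_map.1 hx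
  exact C.enc_mem (C.display v)

lemma vars_clause_subset (x : C.Node) : (C.clause x).vars ⊆ Finset.univ.map C.encEmb := by
  rcases x with v | v | g | i <;>
    simp only [clause, lit, BForm.vars, BForm.vars_or, Finset.union_subset_iff,
      Finset.singleton_subset_iff, enc_mem, and_self]
  refine Circuit.vars_gateFormula_subset (fun j _ => C.enc_mem (C.gate j)) fun hg => ?_
  have hm := C.idxOf_lt_of_label_inp hg
  simp only [BForm.vars_or, BForm.vars, Finset.union_subset_iff, Finset.singleton_subset_iff]
  exact ⟨C.enc_mem (C.display ⟨_, hm⟩), C.enc_mem (C.state ⟨_, hm⟩)⟩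

noncomputable def program : BNL where
  T := Finset.univ.map C.encEmb
  I := C.Ipos.map Fin.valEmbedding
  hIT := C.map_valEmbedding_subset _
  term := Function.extend C.enc C.initVal fun _ => false
  iter := Function.extend C.enc C.clause fun _ => .tru
  hiter := by
    simp only [Finset.forall_mem_map]
    intro x _
    exact (C.enc_injective.extend_apply _ _ x).symm ▸ C.vars_clause_subset x
  Pr := C.Ppos.map Fin.valEmbedding
  hPr := C.map_valEmbedding_subset _
  At := C.Apos.map Fin.valEmbedding
  hAt := C.map_valEmbedding_subset _

lemma program_T : C.program.T = Finset.univ.map C.encEmb := rfl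

lemma program_I : C.program.I = C.Ipos.map Fin.valEmbedding := rfl

lemma program_Pr : C.program.Pr = C.Ppos.map Fin.valEmbedding := rfl

lemma program_At : C.program.At = C.Apos.map Fin.valEmbedding := rfl

lemma program_term_enc (x : C.Node) : C.program.term (C.enc x) = C.initVal x :=
  C.enc_injective.extend_apply C.initVal (fun _ => false) x

lemma program_iter_enc (x : C.Node) : C.program.iter (C.enc x) = C.clause x :=
  C.enc_injective.extend_apply C.clause (fun _ => .tru) x

section Dynamics

open Fin.NatCast

variable (u : ℕ → Bool)

noncomputable def nodeVal (t : ℕ) (x : C.Node) : Bool := C.program.conf u t (C.enc x)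

lemma nodeVal_succ (t : ℕ) (x : C.Node) :
    C.nodeVal u (t + 1) x = (C.clause x).eval (C.program.conf u t) :=
  congrArg (BForm.eval _) (C.program_iter_enc x)

lemma eval_lit (t : ℕ) (x : C.Node) : (C.lit x).eval (C.program.conf u t) = C.nodeVal u t x :=
  rfl

lemma nodeVal_zero_of_notMem {x : C.Node} (hx : C.enc x ∉ C.Ipos.map Fin.valEmbedding) :
    C.nodeVal u 0 x = C.initVal x :=
  (if_neg hx).trans (C.program_term_enc x)

lemma nodeVal_zero_display (v : Fin k) : C.nodeVal u 0 (C.display v) = C.conf u 0 v := by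
  have hI : C.enc (C.display v) ∈ C.Ipos.map Fin.valEmbedding ↔ v ∈ C.Ipos :=
    Finset.mem_map' Fin.valEmbedding
  by_cases hv : v ∈ C.Ipos
  · refine (if_pos (hI.2 hv)).trans ?_
    simp only [conf, if_pos hv, inputVal, enc, program_I, Finset.sort_map_valEmbedding,
      List.idxOf_map_of_injective Fin.val_injective]
  · exact (C.nodeVal_zero_of_notMem u (hI.not.2 hv)).trans (if_neg hv).symm

lemma nodeVal_zero_of_le {x : C.Node} (hx : k ≤ C.enc x) : C.nodeVal u 0 x = C.initVal x :=
  C.nodeVal_zero_of_notMem u fun h => by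
    obtain ⟨v, -, hv⟩ := Finset.mem_map.1 h
    have := v.isLt
    simp only [Fin.valEmbedding_apply] at hv
    omega

lemma nodeVal_clock (t : ℕ) (i : Fin C.period) :
    C.nodeVal u t (C.clock i) = decide ((t : Fin C.period) = i) := by
  induction t generalizing i with
  | zero =>
    rw [C.nodeVal_zero_of_le u (by simp [enc]; omega)]
    simp [initVal, eq_comm]
  | succ t ih =>
    rw [nodeVal_succ, clause, eval_lit, ih, decide_eq_decide, Nat.cast_succ, eq_sub_iff_add_eq]

lemma nodeVal_last (t : ℕ) :
    C.nodeVal u t (C.clock (Fin.last _)) = decide (C.period ∣ t + 1) := by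
  rw [nodeVal_clock, decide_eq_decide, ← Fin.natCast_eq_zero, Nat.cast_succ, ← Fin.last_add_one,
    add_left_inj]

def SimulatesAt (t : ℕ) : Prop :=
  (∀ v, C.nodeVal u t (C.display v) = (decide (C.period ∣ t) && C.conf u (t / C.period) v)) ∧
  (∀ v, (C.nodeVal u t (C.display v) || C.nodeVal u t (C.state v)) =
    C.conf u (t / C.period) v) ∧
  ∀ g, C.height g < t % C.period →
    C.nodeVal u t (C.gate g) = C.eval (feed (C.conf u (t / C.period))) g

variable {C u}

lemma simulatesAt_zero : C.SimulatesAt u 0 := by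
  refine ⟨fun v => ?_, fun v => ?_, fun g hg => absurd hg (by simp)⟩
  · simp [nodeVal_zero_display]
  · rw [nodeVal_zero_display, C.nodeVal_zero_of_le u (by simp [enc]), Nat.zero_div]
    simp [initVal]

lemma SimulatesAt.gate_succ {t : ℕ} (h : C.SimulatesAt u t) (g : Fin C.size)
    (hg : C.height g < (t + 1) % C.period) :
    C.nodeVal u (t + 1) (C.gate g) = C.eval (feed (C.conf u ((t + 1) / C.period))) g := by
  have hnd : ¬C.period ∣ t + 1 := fun hd => by rw [Nat.mod_eq_zero_of_dvd hd] at hg; omega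
  rw [Nat.succ_mod_of_not_dvd hnd] at hg
  rw [nodeVal_succ, Nat.succ_div_of_not_dvd hnd, C.eval_eq_gateValue]
  simp only [clause]
  refine Circuit.eval_gateFormula (fun hinput => ?_) fun j hj => ?_
  · have hm := C.idxOf_lt_of_label_inp hinput
    simpa [feed, hm, BForm.eval, nodeVal, enc] using h.2.1 ⟨_, hm⟩
  · exact h.2.2 j ((C.height_lt_height_of_mem_preds hj).trans_le (Nat.lt_succ_iff.1 hg))

lemma SimulatesAt.display_succ {t : ℕ} (h : C.SimulatesAt u t) (v : Fin k) :
    C.nodeVal u (t + 1) (C.display v) =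
      (decide (C.period ∣ t + 1) && C.conf u ((t + 1) / C.period) v) := by
  rw [nodeVal_succ]
  simp only [clause, BForm.eval, eval_lit, nodeVal_last]
  by_cases hd : C.period ∣ t + 1
  · have hout : C.height (C.outGate v) < t % C.period := by
      have := Nat.mod_add_one_eq_of_dvd_succ hd
      have := C.height_outGate_le v
      simp only [period] at *
      omega
    rw [h.2.2 _ hout, Nat.succ_div_of_dvd hd, conf_succ]
  · simp [hd]

lemma SimulatesAt.succ {t : ℕ} (h : C.SimulatesAt u t) : C.SimulatesAt u (t + 1) := by
  refine ⟨h.display_succ, fun v => ?_, h.gate_succ⟩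
  rw [h.display_succ, nodeVal_succ]
  simp only [clause, BForm.eval, BForm.eval_or, eval_lit, nodeVal_last, h.2.1]
  by_cases hd : C.period ∣ t + 1
  · simp [hd]
  · simp [hd, Nat.succ_div_of_not_dvd hd]

lemma simulatesAt (t : ℕ) : C.SimulatesAt u t := by
  induction t with
  | zero => exact simulatesAt_zero
  | succ t ih => exact ih.succ

end Dynamics

lemma program_conf_val (u : ℕ → Bool) (t : ℕ) (v : Fin k) :
    C.program.conf u t v = (decide (C.period ∣ t) && C.conf u (t / C.period) v) :=
  (simulatesAt t).1 v

lemma program_equivWithDelay {D : ℕ} (hD : C.depth + 2 ≤ D) :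
    EquivWithDelay C.program.toM C.toM D := by
  refine equivWithDelay_of_dilation (Nat.succ_pos _) hD (Finset.card_map _) (Finset.card_map _)
    (fun u t ⟨_, hX, hval⟩ => ?_) (fun u s => ?_) (fun u s => ?_)
  · obtain ⟨v, -, rfl⟩ := Finset.mem_map.1 hX
    simp only [Fin.valEmbedding_apply, program_conf_val, Bool.and_eq_true,
      decide_eq_true_eq] at hval
    exact hval.1
  · simp [BNL.toM, BNL.attn, toM, attn, program_At, program_conf_val]
  · simp [BNL.toM, BNL.out, toM, out, program_Pr, Finset.sort_map_valEmbedding, program_conf_val]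

lemma program_size_le :
    C.program.size ≤ 14 * k + 9 * C.size + 2 * C.period + 3 * C.edgeCount := by
  have hcard : (C.program.T \ C.program.I).card ≤ k + (k + (C.size + C.period)) :=
    (Finset.card_le_card Finset.sdiff_subset).trans_eq (by simp [program])
  have hgates : ∑ g, (C.clause (C.gate g)).size ≤ 3 * C.edgeCount + 8 * C.size := by
    calc ∑ g, (C.clause (C.gate g)).size ≤ ∑ g, (3 * (C.preds g).card + 8) :=
          Finset.sum_le_sum fun g _ => by
            simp only [clause]
            exact Circuit.size_gateFormula_le.trans (by simp [BForm.size])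
      _ = 3 * C.edgeCount + 8 * C.size := by
          rw [Finset.sum_add_distrib, ← Finset.mul_sum, ← C.edgeCount_eq_sum_card_preds]
          simp [mul_comm]
  have hsum : ∑ X ∈ C.program.T, (C.program.iter X).size =
      3 * k + 9 * k + ∑ g, (C.clause (C.gate g)).size + C.period := by
    rw [program_T, Finset.sum_map]
    simp only [encEmb, Function.Embedding.coeFn_mk, program_iter_enc, Fintype.sum_sum_type]
    simp [clause, lit, BForm.size]
    ring
  rw [BNL.size, hsum]
  omega

lemma program_size_le_of_pos (hk : 0 < k) :
    C.program.size ≤ 29 * C.size + 3 * C.edgeCount := by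
  have hkn : k ≤ C.size :=
    C.in_len.symm.trans_le (C.inputs_nodup.length_le_card.trans_eq (Fintype.card_fin _))
  have hn : 0 < C.size := (C.outGate ⟨0, hk⟩).pos
  have hp : C.period ≤ C.size + 2 := Nat.add_le_add_right C.depth_le_size 2
  have := C.program_size_le
  omega

end SelfFeeding

/-- Every self-feeding circuit of size `n`, depth `d` and `m` edges has an
asynchronously equivalent BNL-program of size at most `C·(n+m)` and computation delay at
most `C·(d+1)`; if the circuit has bounded fan-in, the program can be taken of size at most
`C·n`. -/
theorem selfFeeding_to_bnl :
    ∃ C : ℕ, ∀ (k : ℕ) (Cc : SelfFeeding k),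
      (∃ Λ : BNL, Λ.size ≤ C * (Cc.toCircuit.size + Cc.toCircuit.edgeCount) ∧
        EquivWithDelay Λ.toM Cc.toM (C * (Cc.toCircuit.depth + 1))) ∧
      (Cc.toCircuit.BoundedFanIn → ∃ Λ : BNL, Λ.size ≤ C * Cc.toCircuit.size ∧
        EquivWithDelay Λ.toM Cc.toM (C * (Cc.toCircuit.depth + 1))) := by
  refine ⟨35, fun k Cc => ?_⟩
  rcases Nat.eq_zero_or_pos k with rfl | hk
  -- the circuit may then be empty, which leaves no size budget for a clock
  · have h := BNL.equivWithDelay_empty Cc (D := 35 * (Cc.toCircuit.depth + 1)) (by omega)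
    exact ⟨⟨.empty, by simp [BNL.size_empty], h⟩,
      fun _ => ⟨.empty, by simp [BNL.size_empty], h⟩⟩
  · have h := Cc.program_equivWithDelay (D := 35 * (Cc.toCircuit.depth + 1)) (by omega)
    have hsize := Cc.program_size_le_of_pos hk
    refine ⟨⟨Cc.program, by omega, h⟩, fun hC => ⟨Cc.program, ?_, h⟩⟩
    have := Cc.edgeCount_le_two_mul_size hC
    omega
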